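/- Let (X, Π, ∇_D) be a gradient discretisation on Ω, Λ₁ : Ω → ℝ^{d×d} measurable with Λ₁(x) symmetric for a.e. x and λ̲₁|ξ|² ≤ Λ₁(x)ξ·ξ ≤ λ̄₁|ξ|² for a.e. x ∈ Ω and all ξ ∈ ℝ^d (0 < λ̲₁ ≤ λ̄₁), and F₁ : ℝ² → ℝ Lipschitz with constant L, i.e. |F₁(a,b) − F₁(a',b')| ≤ L(|a−a'| + |b−b'|). Fix δt > 0, u₀ ∈ X, and w₁, w₂, w̃₁, w̃₂ ∈ X. Suppose u ∈ X satisfies (1/δt)∫_Ω Π(u − u₀)Πφ + ∫_Ω Λ₁∇_D u·∇_D φ = ∫_Ω F₁(Πw₁, Πw₂)Πφ for all φ ∈ X, and ũ ∈ X satisfies the same equations with (w̃₁, w̃₂) in place of (w₁, w₂). Then (1/δt)‖Π(u − ũ)‖²_{L²(Ω)} + λ̲₁‖∇_D(u − ũ)‖²_{L²(Ω)^d} ≤ L(‖Π(w₁ − w̃₁)‖_{L²(Ω)} + ‖Π(w₂ − w̃₂)‖_{L²(Ω)}) ‖Π(u − ũ)‖_{L²(Ω)}. -/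

import Mathlib

open MeasureTheory Matrix

noncomputable def qf {d : ℕ} (A : Matrix (Fin d) (Fin d) ℝ)
    (a b : EuclideanSpace ℝ (Fin d)) : ℝ :=
  A.mulVec (EuclideanSpace.equiv (Fin d) ℝ a) ⬝ᵥ (EuclideanSpace.equiv (Fin d) ℝ b)

section helpers
variable {α : Type*} [MeasurableSpace α] {μ : Measure α} {d : ℕ}

lemma mul_integrable (f g : Lp ℝ 2 μ) : Integrable (fun x => f x * g x) μ := by
  simpa using L2.integrable_inner (𝕜 := ℝ) g f

lemma inner_eq_integral (f g : Lp ℝ 2 μ) : (inner ℝ f g : ℝ) = ∫ x, f x * g x ∂μ := by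
  rw [L2.inner_def]; congr 1; funext x; simp [mul_comm]

variable {E : Type*} [NormedAddCommGroup E] [InnerProductSpace ℝ E]

lemma norm_sq_integrable (f : Lp E 2 μ) : Integrable (fun x => ‖f x‖ ^ 2) μ := by
  have := L2.integrable_inner (𝕜 := ℝ) f f
  apply this.congr
  filter_upwards with x
  exact real_inner_self_eq_norm_sq _

lemma norm_sq_eq (f : Lp E 2 μ) : ‖f‖ ^ 2 = ∫ x, ‖f x‖ ^ 2 ∂μ := by
  rw [← real_inner_self_eq_norm_sq, L2.inner_def]
  exact integral_congr_ae (by filter_upwards with x using real_inner_self_eq_norm_sq _)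

lemma norm_mul_integrable (f g : Lp E 2 μ) :
    Integrable (fun x => ‖f x‖ * ‖g x‖) μ := by
  apply Integrable.mono' (((norm_sq_integrable f).add (norm_sq_integrable g)).div_const 2)
  · exact (Lp.aestronglyMeasurable f).norm.mul (Lp.aestronglyMeasurable g).norm
  · filter_upwards with x
    simp only [Pi.add_apply]
    rw [Real.norm_eq_abs, abs_of_nonneg (by positivity)]
    nlinarith [sq_nonneg (‖f x‖ - ‖g x‖)]

variable (A : Matrix (Fin d) (Fin d) ℝ) (a a' b b' : EuclideanSpace ℝ (Fin d)) (t : ℝ)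

lemma qf_expand : qf A a b = ∑ i, (∑ j, A i j * a j) * b i := by
  simp [qf, Matrix.mulVec, dotProduct]

lemma qf_add_left : qf A (a + a') b = qf A a b + qf A a' b := by
  simp [qf_expand, PiLp.add_apply, mul_add, add_mul, Finset.sum_add_distrib]

lemma qf_add_right : qf A a (b + b') = qf A a b + qf A a b' := by
  simp [qf_expand, PiLp.add_apply, mul_add, Finset.sum_add_distrib]

lemma qf_smul_left : qf A (t • a) b = t * qf A a b := by
  simp [qf_expand, PiLp.smul_apply, smul_eq_mul, Finset.mul_sum, Finset.sum_mul,
    mul_assoc, mul_left_comm, mul_comm]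

lemma qf_smul_right : qf A a (t • b) = t * qf A a b := by
  simp [qf_expand, PiLp.smul_apply, smul_eq_mul, Finset.mul_sum, Finset.sum_mul,
    mul_assoc, mul_left_comm, mul_comm]

lemma qf_sub_left : qf A (a - a') b = qf A a b - qf A a' b := by
  simp [qf_expand, sub_mul, mul_sub, Finset.sum_sub_distrib, PiLp.sub_apply]

lemma qf_symm {A : Matrix (Fin d) (Fin d) ℝ} (hA : A.IsSymm)
    (a b : EuclideanSpace ℝ (Fin d)) : qf A a b = qf A b a := by
  simp only [qf_expand, Finset.sum_mul]
  rw [Finset.sum_comm]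
  refine Finset.sum_congr rfl fun i _ => Finset.sum_congr rfl fun j _ => ?_
  rw [← hA.apply i j]
  ring

lemma qf_cs {A : Matrix (Fin d) (Fin d) ℝ} (hA : A.IsSymm) {hi : ℝ} (hhi : 0 ≤ hi)
    (h0 : ∀ ξ : EuclideanSpace ℝ (Fin d), 0 ≤ qf A ξ ξ)
    (hup : ∀ ξ : EuclideanSpace ℝ (Fin d), qf A ξ ξ ≤ hi * ‖ξ‖ ^ 2)
    (a b : EuclideanSpace ℝ (Fin d)) : |qf A a b| ≤ hi * (‖a‖ * ‖b‖) := by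
  have hbil : ∀ t : ℝ, qf A (a + t • b) (a + t • b)
      = qf A b b * (t * t) + (2 * qf A a b) * t + qf A a a := by
    intro t
    rw [qf_add_left, qf_add_right, qf_add_right, qf_smul_left, qf_smul_left,
      qf_smul_right, qf_smul_right, qf_symm hA b a]
    ring
  have hdisc : discrim (qf A b b) (2 * qf A a b) (qf A a a) ≤ 0 := by
    apply discrim_le_zero
    intro t
    rw [← hbil t]
    exact h0 _
  rw [discrim] at hdisc
  have h1 : (qf A a b) ^ 2 ≤ qf A a a * qf A b b := by nlinarith
  have h2 : qf A a a * qf A b b ≤ (hi * (‖a‖ * ‖b‖)) ^ 2 := by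
    have := hup a; have := hup b; have := h0 a; have := h0 b
    nlinarith [norm_nonneg a, norm_nonneg b]
  have h3 := abs_le_of_sq_le_sq' (h1.trans h2) (by positivity)
  rw [abs_le]
  exact h3

lemma qf_aesm {Λ : α → Matrix (Fin d) (Fin d) ℝ}
    (hΛ : ∀ i j, Measurable fun x => Λ x i j)
    {f g : α → EuclideanSpace ℝ (Fin d)}
    (hf : AEStronglyMeasurable f μ) (hg : AEStronglyMeasurable g μ) :
    AEStronglyMeasurable (fun x => qf (Λ x) (f x) (g x)) μ := by
  have h : (fun x => qf (Λ x) (f x) (g x))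
      = fun x => ∑ i, (∑ j, Λ x i j * f x j) * g x i := by
    funext x; exact qf_expand _ _ _
  rw [h]
  refine (Finset.aemeasurable_fun_sum Finset.univ fun i _ => ?_).aestronglyMeasurable
  refine AEMeasurable.mul (Finset.aemeasurable_fun_sum Finset.univ fun j _ => ?_) ?_
  · exact (hΛ i j).aemeasurable.mul
      ((EuclideanSpace.proj (𝕜 := ℝ) j).continuous.comp_aestronglyMeasurable hf).aemeasurable
  · exact ((EuclideanSpace.proj (𝕜 := ℝ) i).continuous.comp_aestronglyMeasurable hg).aemeasurable

end helpers
set_option maxHeartbeats 2000000 in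
/-- energy estimate for the difference of two solutions of the linearised
one-step gradient scheme with reaction sources `F₁(Πw₁, Πw₂)` and `F₁(Πw₁', Πw₂')`:
`(1/δt)‖Π(u − u')‖² + λ̲₁‖∇_D(u − u')‖² ≤ L(‖Π(w₁ − w₁')‖ + ‖Π(w₂ − w₂')‖)‖Π(u − u')‖`. -/
theorem stmt3 {d : ℕ} (Ω : Set (EuclideanSpace ℝ (Fin d)))
    (hΩmeas : MeasurableSet Ω) (hΩbdd : Bornology.IsBounded Ω)
    (X : Type*) [AddCommGroup X] [Module ℝ X] [FiniteDimensional ℝ X]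
    (Pi : X →ₗ[ℝ] Lp ℝ 2 (volume.restrict Ω))
    (grad : X →ₗ[ℝ] Lp (EuclideanSpace ℝ (Fin d)) 2 (volume.restrict Ω))
    (hgradinj : Function.Injective grad)
    (Λ₁ : EuclideanSpace ℝ (Fin d) → Matrix (Fin d) (Fin d) ℝ)
    (hΛmeas : ∀ i j, Measurable fun x => Λ₁ x i j)
    (lo₁ hi₁ : ℝ) (hlo : 0 < lo₁) (hlohi : lo₁ ≤ hi₁)
    (hΛsym : ∀ᵐ x ∂(volume.restrict Ω), (Λ₁ x).IsSymm)
    (hΛell : ∀ᵐ x ∂(volume.restrict Ω), ∀ ξ : EuclideanSpace ℝ (Fin d),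
      lo₁ * ‖ξ‖ ^ 2 ≤ qf (Λ₁ x) ξ ξ ∧ qf (Λ₁ x) ξ ξ ≤ hi₁ * ‖ξ‖ ^ 2)
    (F₁ : ℝ → ℝ → ℝ) (L : ℝ)
    (hF₁ : ∀ a a' b b' : ℝ, |F₁ a b - F₁ a' b'| ≤ L * (|a - a'| + |b - b'|))
    (δt : ℝ) (hδt : 0 < δt) (u₀ : X) (w₁ w₂ w₁' w₂' : X) (u u' : X)
    (hu : ∀ φ : X,
      (1 / δt) * (∫ x, (Pi (u - u₀)) x * (Pi φ) x ∂(volume.restrict Ω))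
        + (∫ x, qf (Λ₁ x) ((grad u) x) ((grad φ) x) ∂(volume.restrict Ω))
      = ∫ x, F₁ ((Pi w₁) x) ((Pi w₂) x) * (Pi φ) x ∂(volume.restrict Ω))
    (hu' : ∀ φ : X,
      (1 / δt) * (∫ x, (Pi (u' - u₀)) x * (Pi φ) x ∂(volume.restrict Ω))
        + (∫ x, qf (Λ₁ x) ((grad u') x) ((grad φ) x) ∂(volume.restrict Ω))
      = ∫ x, F₁ ((Pi w₁') x) ((Pi w₂') x) * (Pi φ) x ∂(volume.restrict Ω)) :
    (1 / δt) * ‖Pi (u - u')‖ ^ 2 + lo₁ * ‖grad (u - u')‖ ^ 2 ≤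
      L * (‖Pi (w₁ - w₁')‖ + ‖Pi (w₂ - w₂')‖) * ‖Pi (u - u')‖ := by
  haveI : IsFiniteMeasure (volume.restrict Ω) := ⟨by
    rw [Measure.restrict_apply_univ]; exact hΩbdd.measure_lt_top⟩
  have hL0 : 0 ≤ L := by
    have h := hF₁ 1 0 0 0
    have h2 := abs_nonneg (F₁ 1 0 - F₁ 0 0)
    simp at h
    linarith
  have hhi0 : 0 ≤ hi₁ := le_trans hlo.le hlohi
  set φ := u - u' with hφdef
  -- a.e. coercion identities
  have hPiφ : ∀ᵐ x ∂(volume.restrict Ω), (Pi φ) x = (Pi (u - u₀)) x - (Pi (u' - u₀)) x := by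
    have h1 : Pi φ = Pi (u - u₀) - Pi (u' - u₀) := by
      rw [← map_sub]; congr 1; rw [hφdef]; abel
    rw [h1]; exact Lp.coeFn_sub _ _
  have hgφ : ∀ᵐ x ∂(volume.restrict Ω), (grad φ) x = (grad u) x - (grad u') x := by
    have h1 : grad φ = grad u - grad u' := by rw [hφdef, map_sub]
    rw [h1]; exact Lp.coeFn_sub _ _
  have hw1 : ∀ᵐ x ∂(volume.restrict Ω), (Pi (w₁ - w₁')) x = (Pi w₁) x - (Pi w₁') x := by
    rw [map_sub]; exact Lp.coeFn_sub _ _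
  have hw2 : ∀ᵐ x ∂(volume.restrict Ω), (Pi (w₂ - w₂')) x = (Pi w₂) x - (Pi w₂') x := by
    rw [map_sub]; exact Lp.coeFn_sub _ _
  -- integrability facts
  have I1 : Integrable (fun x => (Pi (u - u₀)) x * (Pi φ) x) (volume.restrict Ω) := mul_integrable _ _
  have I2 : Integrable (fun x => (Pi (u' - u₀)) x * (Pi φ) x) (volume.restrict Ω) := mul_integrable _ _
  have Iq : ∀ v : X, Integrable (fun x => qf (Λ₁ x) ((grad v) x) ((grad φ) x)) (volume.restrict Ω) := by
    intro v
    apply Integrable.mono' ((norm_mul_integrable (grad v) (grad φ)).const_mul hi₁)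
    · exact qf_aesm hΛmeas (Lp.aestronglyMeasurable _) (Lp.aestronglyMeasurable _)
    · filter_upwards [hΛsym, hΛell] with x hsym hell
      exact qf_cs hsym hhi0
        (fun ξ => le_trans (mul_nonneg hlo.le (sq_nonneg _)) (hell ξ).1)
        (fun ξ => (hell ξ).2) _ _
  have hcont : Continuous (fun p : ℝ × ℝ => F₁ p.1 p.2) := by
    have hlip : LipschitzWith (Real.toNNReal (2 * L)) (fun p : ℝ × ℝ => F₁ p.1 p.2) := by
      apply LipschitzWith.of_dist_le_mul
      intro p q
      have h := hF₁ p.1 q.1 p.2 q.2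
      have h1 : |p.1 - q.1| ≤ dist p q := by rw [← Real.dist_eq, Prod.dist_eq]; exact le_max_left _ _
      have h2 : |p.2 - q.2| ≤ dist p q := by rw [← Real.dist_eq, Prod.dist_eq]; exact le_max_right _ _
      have hc : ((Real.toNNReal (2 * L) : NNReal) : ℝ) = 2 * L :=
        Real.coe_toNNReal _ (by linarith)
      rw [Real.dist_eq, hc]
      have hd : (0:ℝ) ≤ dist p q := dist_nonneg
      nlinarith [abs_nonneg (p.1 - q.1), abs_nonneg (p.2 - q.2)]
    exact hlip.continuous
  have IF : ∀ v₁ v₂ : X,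
      Integrable (fun x => F₁ ((Pi v₁) x) ((Pi v₂) x) * (Pi φ) x) (volume.restrict Ω) := by
    intro v₁ v₂
    have hφint : Integrable (fun x => (Pi φ) x) (volume.restrict Ω) :=
      MemLp.integrable one_le_two (Lp.memLp (Pi φ))
    have Idom : Integrable
        (fun x => (|F₁ 0 0| + L * |(Pi v₁) x| + L * |(Pi v₂) x|) * |(Pi φ) x|) (volume.restrict Ω) := by
      have e : (fun x => (|F₁ 0 0| + L * |(Pi v₁) x| + L * |(Pi v₂) x|) * |(Pi φ) x|)
          = fun x => |F₁ 0 0| * |(Pi φ) x|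
            + L * (|(Pi v₁) x| * |(Pi φ) x|) + L * (|(Pi v₂) x| * |(Pi φ) x|) := by
        funext x; ring
      rw [e]
      have habsmul : ∀ v : X, Integrable (fun x => |(Pi v) x| * |(Pi φ) x|) (volume.restrict Ω) := by
        intro v
        apply (mul_integrable (Pi v) (Pi φ)).abs.congr
        filter_upwards with x using abs_mul _ _
      exact ((hφint.abs.const_mul _).add ((habsmul v₁).const_mul L)).add
        ((habsmul v₂).const_mul L)
    apply Idom.mono'
    · exact (hcont.comp_aestronglyMeasurable
        ((Lp.aestronglyMeasurable (Pi v₁)).prodMk (Lp.aestronglyMeasurable (Pi v₂)))).mul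
        (Lp.aestronglyMeasurable (Pi φ))
    · filter_upwards with x
      rw [Real.norm_eq_abs, abs_mul]
      apply mul_le_mul_of_nonneg_right _ (abs_nonneg _)
      have h := hF₁ ((Pi v₁) x) 0 ((Pi v₂) x) 0
      have h2 := abs_sub_abs_le_abs_sub (F₁ ((Pi v₁) x) ((Pi v₂) x)) (F₁ 0 0)
      simp only [sub_zero] at h
      calc |F₁ ((Pi v₁) x) ((Pi v₂) x)|
          ≤ |F₁ ((Pi v₁) x) ((Pi v₂) x) - F₁ 0 0| + |F₁ 0 0| := by
            have := abs_sub_abs_le_abs_sub (F₁ ((Pi v₁) x) ((Pi v₂) x)) (F₁ 0 0)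
            linarith [abs_nonneg (F₁ 0 0)]
        _ ≤ L * (|(Pi v₁) x| + |(Pi v₂) x|) + |F₁ 0 0| := by linarith
        _ = |F₁ 0 0| + L * |(Pi v₁) x| + L * |(Pi v₂) x| := by ring
  -- the three integral identities
  have key := hu φ
  have key' := hu' φ
  have e1 : (∫ x, (Pi (u - u₀)) x * (Pi φ) x ∂(volume.restrict Ω))
      - (∫ x, (Pi (u' - u₀)) x * (Pi φ) x ∂(volume.restrict Ω)) = ‖Pi φ‖ ^ 2 := by
    rw [← integral_sub I1 I2]
    have h : ∀ᵐ x ∂(volume.restrict Ω), (Pi (u - u₀)) x * (Pi φ) x - (Pi (u' - u₀)) x * (Pi φ) x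
        = (Pi φ) x * (Pi φ) x := by
      filter_upwards [hPiφ] with x hx; rw [hx]; ring
    rw [integral_congr_ae h, ← inner_eq_integral, real_inner_self_eq_norm_sq]
  have e2 : (∫ x, qf (Λ₁ x) ((grad u) x) ((grad φ) x) ∂(volume.restrict Ω))
      - (∫ x, qf (Λ₁ x) ((grad u') x) ((grad φ) x) ∂(volume.restrict Ω))
      = ∫ x, qf (Λ₁ x) ((grad φ) x) ((grad φ) x) ∂(volume.restrict Ω) := by
    rw [← integral_sub (Iq u) (Iq u')]
    apply integral_congr_ae
    filter_upwards [hgφ] with x hx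
    rw [hx, qf_sub_left]
  have e3 : (∫ x, F₁ ((Pi w₁) x) ((Pi w₂) x) * (Pi φ) x ∂(volume.restrict Ω))
      - (∫ x, F₁ ((Pi w₁') x) ((Pi w₂') x) * (Pi φ) x ∂(volume.restrict Ω))
      = ∫ x, (F₁ ((Pi w₁) x) ((Pi w₂) x) - F₁ ((Pi w₁') x) ((Pi w₂') x)) * (Pi φ) x ∂(volume.restrict Ω) := by
    rw [← integral_sub (IF w₁ w₂) (IF w₁' w₂')]
    exact integral_congr_ae (Filter.Eventually.of_forall fun x => by ring)
  -- bound the right-hand side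
  have habsCS : ∀ f g : Lp ℝ 2 (volume.restrict Ω), (∫ x, |f x| * |g x| ∂(volume.restrict Ω)) ≤ ‖f‖ * ‖g‖ := by
    intro f g
    have hnab : ∀ h : Lp ℝ 2 (volume.restrict Ω), ‖(|h| : Lp ℝ 2 (volume.restrict Ω))‖ = ‖h‖ := by
      intro h
      rw [Lp.norm_def, Lp.norm_def]
      congr 1
      rw [eLpNorm_congr_ae (Lp.coeFn_abs h)]
      rw [show (fun x => |h x|) = fun x => ‖h x‖ from funext fun x => (Real.norm_eq_abs _).symm]
      exact eLpNorm_norm _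
    have h1 : (∫ x, |f x| * |g x| ∂(volume.restrict Ω)) = (inner ℝ (|f| : Lp ℝ 2 (volume.restrict Ω)) (|g| : Lp ℝ 2 (volume.restrict Ω)) : ℝ) := by
      rw [inner_eq_integral]
      apply integral_congr_ae
      filter_upwards [Lp.coeFn_abs f, Lp.coeFn_abs g] with x ha hb
      rw [ha, hb]
    rw [h1, ← hnab f, ← hnab g]
    exact real_inner_le_norm _ _
  have Iabs : ∀ f g : Lp ℝ 2 (volume.restrict Ω), Integrable (fun x => |f x| * |g x|) (volume.restrict Ω) := by
    intro f g
    apply (mul_integrable f g).abs.congr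
    filter_upwards with x using abs_mul _ _
  have ebound : (∫ x, (F₁ ((Pi w₁) x) ((Pi w₂) x) - F₁ ((Pi w₁') x) ((Pi w₂') x)) * (Pi φ) x ∂(volume.restrict Ω))
      ≤ L * (‖Pi (w₁ - w₁')‖ + ‖Pi (w₂ - w₂')‖) * ‖Pi φ‖ := by
    have hIL : Integrable
        (fun x => (F₁ ((Pi w₁) x) ((Pi w₂) x) - F₁ ((Pi w₁') x) ((Pi w₂') x)) * (Pi φ) x) (volume.restrict Ω) := by
      have h := (IF w₁ w₂).sub (IF w₁' w₂')
      apply h.congr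
      filter_upwards with x
      exact (sub_mul _ _ _).symm
    have hIR : Integrable
        (fun x => L * ((|(Pi (w₁ - w₁')) x| + |(Pi (w₂ - w₂')) x|) * |(Pi φ) x|)) (volume.restrict Ω) := by
      apply Integrable.const_mul
      have e : (fun x => (|(Pi (w₁ - w₁')) x| + |(Pi (w₂ - w₂')) x|) * |(Pi φ) x|)
          = fun x => |(Pi (w₁ - w₁')) x| * |(Pi φ) x| + |(Pi (w₂ - w₂')) x| * |(Pi φ) x| := by
        funext x; ring
      rw [e]
      exact (Iabs _ _).add (Iabs _ _)
    have step1 : (∫ x, (F₁ ((Pi w₁) x) ((Pi w₂) x) - F₁ ((Pi w₁') x) ((Pi w₂') x)) * (Pi φ) x ∂(volume.restrict Ω))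
        ≤ ∫ x, L * ((|(Pi (w₁ - w₁')) x| + |(Pi (w₂ - w₂')) x|) * |(Pi φ) x|) ∂(volume.restrict Ω) := by
      apply integral_mono_ae hIL hIR
      filter_upwards [hw1, hw2] with x h1 h2
      rw [h1, h2]
      calc (F₁ ((Pi w₁) x) ((Pi w₂) x) - F₁ ((Pi w₁') x) ((Pi w₂') x)) * (Pi φ) x
          ≤ |(F₁ ((Pi w₁) x) ((Pi w₂) x) - F₁ ((Pi w₁') x) ((Pi w₂') x)) * (Pi φ) x| :=
            le_abs_self _
        _ = |F₁ ((Pi w₁) x) ((Pi w₂) x) - F₁ ((Pi w₁') x) ((Pi w₂') x)| * |(Pi φ) x| :=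
            abs_mul _ _
        _ ≤ (L * (|(Pi w₁) x - (Pi w₁') x| + |(Pi w₂) x - (Pi w₂') x|)) * |(Pi φ) x| :=
            mul_le_mul_of_nonneg_right (hF₁ _ _ _ _) (abs_nonneg _)
        _ = L * ((|(Pi w₁) x - (Pi w₁') x| + |(Pi w₂) x - (Pi w₂') x|) * |(Pi φ) x|) := by
            ring
    have step2 : (∫ x, L * ((|(Pi (w₁ - w₁')) x| + |(Pi (w₂ - w₂')) x|) * |(Pi φ) x|) ∂(volume.restrict Ω))
        ≤ L * (‖Pi (w₁ - w₁')‖ + ‖Pi (w₂ - w₂')‖) * ‖Pi φ‖ := by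
      rw [integral_const_mul]
      have e : (∫ x, (|(Pi (w₁ - w₁')) x| + |(Pi (w₂ - w₂')) x|) * |(Pi φ) x| ∂(volume.restrict Ω))
          = (∫ x, |(Pi (w₁ - w₁')) x| * |(Pi φ) x| ∂(volume.restrict Ω))
            + ∫ x, |(Pi (w₂ - w₂')) x| * |(Pi φ) x| ∂(volume.restrict Ω) := by
        rw [← integral_add (Iabs _ _) (Iabs _ _)]
        exact integral_congr_ae (Filter.Eventually.of_forall fun x => by ring)
      rw [e, mul_assoc]
      apply mul_le_mul_of_nonneg_left _ hL0
      calc (∫ x, |(Pi (w₁ - w₁')) x| * |(Pi φ) x| ∂(volume.restrict Ω))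
            + ∫ x, |(Pi (w₂ - w₂')) x| * |(Pi φ) x| ∂(volume.restrict Ω)
          ≤ ‖Pi (w₁ - w₁')‖ * ‖Pi φ‖ + ‖Pi (w₂ - w₂')‖ * ‖Pi φ‖ :=
            add_le_add (habsCS _ _) (habsCS _ _)
        _ = (‖Pi (w₁ - w₁')‖ + ‖Pi (w₂ - w₂')‖) * ‖Pi φ‖ := by ring
    exact step1.trans step2
  -- coercivity
  have ecoer : lo₁ * ‖grad φ‖ ^ 2 ≤ ∫ x, qf (Λ₁ x) ((grad φ) x) ((grad φ) x) ∂(volume.restrict Ω) := by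
    rw [norm_sq_eq (grad φ), ← integral_const_mul]
    apply integral_mono_ae ((norm_sq_integrable (grad φ)).const_mul lo₁) (Iq φ)
    filter_upwards [hΛell] with x hell using (hell ((grad φ) x)).1
  -- assemble
  have hmain : (1 / δt) * ‖Pi φ‖ ^ 2 + (∫ x, qf (Λ₁ x) ((grad φ) x) ((grad φ) x) ∂(volume.restrict Ω))
      = (∫ x, F₁ ((Pi w₁) x) ((Pi w₂) x) * (Pi φ) x ∂(volume.restrict Ω))
        - ∫ x, F₁ ((Pi w₁') x) ((Pi w₂') x) * (Pi φ) x ∂(volume.restrict Ω) := by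
    rw [← e1, ← e2]
    ring_nf
    ring_nf at key key'
    linarith
  have hRb : (∫ x, F₁ ((Pi w₁) x) ((Pi w₂) x) * (Pi φ) x ∂(volume.restrict Ω))
      - (∫ x, F₁ ((Pi w₁') x) ((Pi w₂') x) * (Pi φ) x ∂(volume.restrict Ω))
      ≤ L * (‖Pi (w₁ - w₁')‖ + ‖Pi (w₂ - w₂')‖) * ‖Pi φ‖ := by
    rw [e3]; exact ebound
  linarith
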